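/- arXiv:2509.04133 — 4 statements merged into one kernel-verified Lean document; each statement's English description precedes it below -/
import Mathlib

section
/- Let g : ℝ^d → ℝ ∪ {+∞} be proper convex lower semicontinuous, let G_0, G_1, … : ℝ^d → ℝ^d each be L-Lipschitz, let γ > 0, and let n ≥ 1 be an integer. Starting from z^0 ∈ ℝ^d, define for i = 0, 1, 2, …: z^{i+1/2} = prox_{γg}(z^i − γ G_i(z^i)) and z^{i+1} = prox_{γg}(z^i − γ G_i(z^{i+1/2})). Then for every t ≥ 0: ‖z^{t+1/2} − z^0‖² ≤ (1 + n + n γ² L²) · ∑_{i=0}^{t} (1 + 1/n)^{2(t−i)} ‖z^{i+1/2} − z^i‖². -/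
/-!
The proximal map of a proper convex function is nonexpansive (via the variational inequality
`x - prox x ∈ γ ∂g (prox x)`), so the corrector `z^{i+1}` lies within `γ L ‖z^{i+1/2} - z^i‖` of
`z^{i+1/2}` and every full step has length at most `(1 + γ L) ‖z^{i+1/2} - z^i‖`. Telescoping
bounds `‖z^{t+1/2} - z^0‖` by a weighted sum of the residuals `‖z^{i+1/2} - z^i‖`; Cauchy–Schwarz
with the geometric weights `(1 + 1/n)^{2(t-i)}` then gives the square bound, the reciprocal
weights summing to at most `n / 2`.
-/

open Finset Filter Topology

theorem convexOn_toReal_of_ne_bot {E : Type*} [AddCommGroup E] [Module ℝ E] {g : E → EReal}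
    (hg_bot : ∀ x, g x ≠ ⊥)
    (hg_convex : ∀ (x y : E) (a b : ℝ), 0 ≤ a → 0 ≤ b → a + b = 1 →
      g (a • x + b • y) ≤ (a : EReal) * g x + (b : EReal) * g y) :
    ConvexOn ℝ {x | g x ≠ ⊤} fun x => (g x).toReal := by
  have hcomb : ∀ x, g x ≠ ⊤ → ∀ y, g y ≠ ⊤ → ∀ a b : ℝ, 0 ≤ a → 0 ≤ b → a + b = 1 →
      g (a • x + b • y) ≤ ((a * (g x).toReal + b * (g y).toReal : ℝ) : EReal) := by
    intro x hx y hy a b ha hb hab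
    rw [EReal.coe_add, EReal.coe_mul, EReal.coe_mul, EReal.coe_toReal hx (hg_bot x),
      EReal.coe_toReal hy (hg_bot y)]
    exact hg_convex x y a b ha hb hab
  refine ⟨fun x hx y hy a b ha hb hab => ?_, fun x hx y hy a b ha hb hab => ?_⟩
  · exact ((hcomb x hx y hy a b ha hb hab).trans_lt (EReal.coe_lt_top _)).ne
  · exact (EReal.toReal_le_toReal (hcomb x hx y hy a b ha hb hab) (hg_bot _)
      (EReal.coe_ne_top _)).trans_eq (EReal.toReal_coe _)

section Proximal

variable {E : Type*} [NormedAddCommGroup E]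

def IsProximalMap (γ : ℝ) (g : E → EReal) (prox : E → E) : Prop :=
  ∀ x y, (γ : EReal) * g (prox x) + ((‖prox x - x‖ ^ 2 / 2 : ℝ) : EReal)
    ≤ (γ : EReal) * g y + ((‖y - x‖ ^ 2 / 2 : ℝ) : EReal)

variable {γ : ℝ} {g : E → EReal} {prox : E → E}

theorem IsProximalMap.apply_ne_top (h : IsProximalMap γ g prox) (hγ : 0 < γ)
    (hg_bot : ∀ x, g x ≠ ⊥) (hg_top : ∃ x, g x ≠ ⊤) (x : E) : g (prox x) ≠ ⊤ := by
  intro htop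
  obtain ⟨y, hy⟩ := hg_top
  have hxy := h x y
  rw [htop, EReal.coe_mul_top_of_pos hγ, EReal.top_add_of_ne_bot (EReal.coe_ne_bot _), top_le_iff,
    ← EReal.coe_toReal hy (hg_bot y), ← EReal.coe_mul, ← EReal.coe_add] at hxy
  exact EReal.coe_ne_top _ hxy

theorem IsProximalMap.isMinOn (h : IsProximalMap γ g prox) (hγ : 0 < γ)
    (hg_bot : ∀ x, g x ≠ ⊥) (hg_top : ∃ x, g x ≠ ⊤) (x : E) :
    IsMinOn (fun u => γ • (g u).toReal + ‖u - x‖ ^ 2 / 2) {u | g u ≠ ⊤} (prox x) := by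
  intro y hy
  have hxy := h x y
  rw [← EReal.coe_toReal (h.apply_ne_top hγ hg_bot hg_top x) (hg_bot _),
    ← EReal.coe_toReal hy (hg_bot y), ← EReal.coe_mul, ← EReal.coe_mul, ← EReal.coe_add,
    ← EReal.coe_add, EReal.coe_le_coe_iff] at hxy
  exact hxy

variable [InnerProductSpace ℝ E]

theorem ConvexOn.sub_le_inner_of_isMinOn {D : Set E} {φ : E → ℝ} (hφ : ConvexOn ℝ D φ)
    {x p : E} (hp : p ∈ D) (hmin : IsMinOn (fun u => φ u + ‖u - x‖ ^ 2 / 2) D p)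
    {y : E} (hy : y ∈ D) :
    φ p - φ y ≤ inner ℝ (p - x) (y - p) := by
  have hperturbed : ∀ s ∈ Set.Ioc (0 : ℝ) 1,
      φ p - φ y ≤ inner ℝ (p - x) (y - p) + s * (‖y - p‖ ^ 2 / 2) := by
    rintro s ⟨hs0, hs1⟩
    have hm := hφ.1 hp hy (sub_nonneg.2 hs1) hs0.le (sub_add_cancel 1 s)
    have hconv := hφ.2 hp hy (sub_nonneg.2 hs1) hs0.le (sub_add_cancel 1 s)
    have hle : φ p + ‖p - x‖ ^ 2 / 2
        ≤ φ ((1 - s) • p + s • y) + ‖(1 - s) • p + s • y - x‖ ^ 2 / 2 := hmin hm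
    have hnorm : ‖(1 - s) • p + s • y - x‖ ^ 2
        = ‖p - x‖ ^ 2 + 2 * s * inner ℝ (p - x) (y - p) + s ^ 2 * ‖y - p‖ ^ 2 := by
      rw [show (1 - s) • p + s • y - x = (p - x) + s • (y - p) by module, norm_add_sq_real,
        real_inner_smul_right, norm_smul, Real.norm_of_nonneg hs0.le]
      ring
    rw [smul_eq_mul, smul_eq_mul] at hconv
    refine le_of_mul_le_mul_left ?_ hs0
    nlinarith
  have hlim : Tendsto (fun s : ℝ => inner ℝ (p - x) (y - p) + s * (‖y - p‖ ^ 2 / 2))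
      (𝓝[>] 0) (𝓝 (inner ℝ (p - x) (y - p))) := by
    have hcont : Continuous fun s : ℝ => inner ℝ (p - x) (y - p) + s * (‖y - p‖ ^ 2 / 2) := by
      fun_prop
    simpa using (hcont.tendsto 0).mono_left nhdsWithin_le_nhds
  exact ge_of_tendsto hlim (mem_of_superset (Ioc_mem_nhdsGT zero_lt_one) hperturbed)

theorem ConvexOn.norm_sub_sq_le_inner_of_isMinOn {D : Set E} {φ : E → ℝ}
    (hφ : ConvexOn ℝ D φ) {x y p q : E} (hp : p ∈ D) (hq : q ∈ D)
    (hpmin : IsMinOn (fun u => φ u + ‖u - x‖ ^ 2 / 2) D p)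
    (hqmin : IsMinOn (fun u => φ u + ‖u - y‖ ^ 2 / 2) D q) :
    ‖p - q‖ ^ 2 ≤ inner ℝ (x - y) (p - q) := by
  have hpq := hφ.sub_le_inner_of_isMinOn hp hpmin hq
  have hqp := hφ.sub_le_inner_of_isMinOn hq hqmin hp
  have hsum : inner ℝ (p - x) (q - p) + inner ℝ (q - y) (p - q)
      = inner ℝ (x - y) (p - q) - ‖p - q‖ ^ 2 := by
    rw [← real_inner_self_eq_norm_sq, ← inner_sub_left, ← neg_sub p q, inner_neg_right,
      ← inner_neg_left, ← inner_add_left]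
    congr 1
    abel
  linarith

theorem ConvexOn.norm_sub_le_of_isMinOn {D : Set E} {φ : E → ℝ}
    (hφ : ConvexOn ℝ D φ) {x y p q : E} (hp : p ∈ D) (hq : q ∈ D)
    (hpmin : IsMinOn (fun u => φ u + ‖u - x‖ ^ 2 / 2) D p)
    (hqmin : IsMinOn (fun u => φ u + ‖u - y‖ ^ 2 / 2) D q) :
    ‖p - q‖ ≤ ‖x - y‖ := by
  have hfirm := hφ.norm_sub_sq_le_inner_of_isMinOn hp hq hpmin hqmin
  have hcs := real_inner_le_norm (x - y) (p - q)
  nlinarith [norm_nonneg (p - q), norm_nonneg (x - y)]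

theorem IsProximalMap.lipschitzWith_one (h : IsProximalMap γ g prox) (hγ : 0 < γ)
    (hg_bot : ∀ x, g x ≠ ⊥) (hg_top : ∃ x, g x ≠ ⊤)
    (hg_convex : ∀ (x y : E) (a b : ℝ), 0 ≤ a → 0 ≤ b → a + b = 1 →
      g (a • x + b • y) ≤ (a : EReal) * g x + (b : EReal) * g y) :
    LipschitzWith 1 prox := by
  have hφ := (convexOn_toReal_of_ne_bot hg_bot hg_convex).smul hγ.le
  refine LipschitzWith.of_dist_le_mul fun x y => ?_
  rw [dist_eq_norm, dist_eq_norm, NNReal.coe_one, one_mul]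
  exact hφ.norm_sub_le_of_isMinOn (h.apply_ne_top hγ hg_bot hg_top x)
    (h.apply_ne_top hγ hg_bot hg_top y) (h.isMinOn hγ hg_bot hg_top x)
    (h.isMinOn hγ hg_bot hg_top y)

end Proximal

theorem norm_map_sub_smul_sub_le {E : Type*} [SeminormedAddCommGroup E] [NormedSpace ℝ E]
    {P : E → E} (hP : LipschitzWith 1 P) {F : E → E} {L : ℝ}
    (hF : ∀ u v, ‖F u - F v‖ ≤ L * ‖u - v‖) {γ : ℝ} (hγ : 0 ≤ γ) (u v w : E) :
    ‖P (u - γ • F v) - P (u - γ • F w)‖ ≤ γ * L * ‖v - w‖ :=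
  calc ‖P (u - γ • F v) - P (u - γ • F w)‖ ≤ ‖(u - γ • F v) - (u - γ • F w)‖ := by
        simpa using hP.norm_sub_le (u - γ • F v) (u - γ • F w)
    _ = γ * ‖F w - F v‖ := by
        rw [sub_sub_sub_cancel_left, ← smul_sub, norm_smul, Real.norm_of_nonneg hγ]
    _ ≤ γ * (L * ‖w - v‖) := by gcongr; exact hF w v
    _ = γ * L * ‖v - w‖ := by rw [norm_sub_rev, mul_assoc]

theorem norm_sub_le_add_mul_sum_of_step_le {E : Type*} [SeminormedAddCommGroup E]
    (z w : ℕ → E) {K : ℝ} (hstep : ∀ i, ‖z (i + 1) - z i‖ ≤ K * ‖w i - z i‖) (t : ℕ) :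
    ‖w t - z 0‖ ≤ ‖w t - z t‖ + K * ∑ i ∈ range t, ‖w i - z i‖ :=
  calc ‖w t - z 0‖ ≤ ‖w t - z t‖ + ∑ i ∈ range t, ‖z (i + 1) - z i‖ := by
        refine (norm_sub_le_norm_sub_add_norm_sub _ (z t) _).trans ((add_le_add_iff_left _).2 ?_)
        simpa only [dist_eq_norm'] using dist_le_range_sum_dist z t
    _ ≤ ‖w t - z t‖ + K * ∑ i ∈ range t, ‖w i - z i‖ := by
        rw [mul_sum]; gcongr with i; exact hstep i

theorem sum_range_inv_pow_sub_le {n : ℝ} (hn : 0 < n) (t : ℕ) :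
    ∑ i ∈ range t, ((1 + 1 / n) ^ (2 * (t - i)))⁻¹ ≤ n / 2 := by
  set r : ℝ := ((1 + 1 / n) ^ 2)⁻¹ with hr
  have hr0 : 0 ≤ r := by positivity
  have hr_eq : r = n ^ 2 / (n + 1) ^ 2 := by rw [hr]; field_simp
  have hr1 : r < 1 := by
    rw [hr_eq, div_lt_one (by positivity)]; nlinarith
  have hreflect : ∑ i ∈ range t, ((1 + 1 / n) ^ (2 * (t - i)))⁻¹ = r * ∑ k ∈ range t, r ^ k := by
    rw [← sum_range_reflect, mul_sum]
    refine sum_congr rfl fun k hk => ?_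
    rw [hr, ← pow_succ', pow_mul, inv_pow]
    congr 2
    have := mem_range.1 hk
    omega
  calc ∑ i ∈ range t, ((1 + 1 / n) ^ (2 * (t - i)))⁻¹ = r * ∑ k ∈ range t, r ^ k := hreflect
    _ ≤ r * (1 - r)⁻¹ := by
        gcongr
        simpa using geom_sum_Ico_le_of_lt_one (m := 0) (n := t) hr0 hr1
    _ ≤ n / 2 := by
        have hdiv : r * (1 - r)⁻¹ = n ^ 2 / (2 * n + 1) := by
          have h1r : 1 - r = (2 * n + 1) / (n + 1) ^ 2 := by rw [hr_eq]; field_simp; ring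
          rw [h1r, hr_eq, inv_div, div_mul_div_cancel₀ (by positivity)]
        rw [hdiv, div_le_div_iff₀ (by positivity) two_pos]
        nlinarith

theorem sq_add_mul_sum_range_le {n : ℝ} (hn : 0 < n) (K : ℝ) (b : ℕ → ℝ) (t : ℕ) :
    (b t + K * ∑ i ∈ range t, b i) ^ 2
      ≤ (1 + n / 2 * K ^ 2) * ∑ i ∈ range (t + 1), (1 + 1 / n) ^ (2 * (t - i)) * b i ^ 2 := by
  set w : ℕ → ℝ := fun i => (1 + 1 / n) ^ (2 * (t - i))
  have hw : ∀ i, 0 < w i := fun i => by positivity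
  set c : ℕ → ℝ := fun i => if i = t then 1 else K
  have hsum : b t + K * ∑ i ∈ range t, b i = ∑ i ∈ range (t + 1), c i * b i := by
    rw [sum_range_succ, add_comm, mul_sum]
    congr 1
    · exact sum_congr rfl fun i hi => by simp [c, (mem_range.1 hi).ne]
    · simp [c]
  have hweights : ∑ i ∈ range (t + 1), c i ^ 2 / w i ≤ 1 + n / 2 * K ^ 2 := by
    have hlast : c t ^ 2 / w t = 1 := by simp [c, w]
    have hinit : ∑ i ∈ range t, c i ^ 2 / w i = K ^ 2 * ∑ i ∈ range t, (w i)⁻¹ := by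
      rw [mul_sum]
      exact sum_congr rfl fun i hi => by simp [c, (mem_range.1 hi).ne, div_eq_mul_inv]
    rw [sum_range_succ, hlast, hinit, add_comm, mul_comm (n / 2)]
    gcongr
    exact sum_range_inv_pow_sub_le hn t
  rw [hsum]
  calc (∑ i ∈ range (t + 1), c i * b i) ^ 2
      ≤ (∑ i ∈ range (t + 1), c i ^ 2 / w i) * ∑ i ∈ range (t + 1), w i * b i ^ 2 :=
        sum_sq_le_sum_mul_sum_of_sq_le_mul _ (fun i _ => by have := hw i; positivity)
          (fun i _ => by have := hw i; positivity)
          (fun i _ => le_of_eq (by field_simp [(hw i).ne']))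
    _ ≤ (1 + n / 2 * K ^ 2) * ∑ i ∈ range (t + 1), w i * b i ^ 2 := by
        gcongr

theorem extragradient_epoch_drift_bound_general
    (d n : ℕ) (hn : 1 ≤ n) (L γ : ℝ) (hγ : 0 < γ)
    (g : EuclideanSpace ℝ (Fin d) → EReal)
    (hg_bot : ∀ x, g x ≠ ⊥) (hg_top : ∃ x, g x ≠ ⊤)
    (hg_convex : ∀ (x y : EuclideanSpace ℝ (Fin d)) (a b : ℝ), 0 ≤ a → 0 ≤ b → a + b = 1 →
      g (a • x + b • y) ≤ (a : EReal) * g x + (b : EReal) * g y)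
    (prox : EuclideanSpace ℝ (Fin d) → EuclideanSpace ℝ (Fin d))
    (hprox : ∀ x y : EuclideanSpace ℝ (Fin d),
      (γ : EReal) * g (prox x) + ((‖prox x - x‖ ^ 2 / 2 : ℝ) : EReal)
        ≤ (γ : EReal) * g y + ((‖y - x‖ ^ 2 / 2 : ℝ) : EReal))
    (G : ℕ → EuclideanSpace ℝ (Fin d) → EuclideanSpace ℝ (Fin d))
    (hGLip : ∀ (i : ℕ) (z₁ z₂ : EuclideanSpace ℝ (Fin d)), ‖G i z₁ - G i z₂‖ ≤ L * ‖z₁ - z₂‖)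
    (z zhalf : ℕ → EuclideanSpace ℝ (Fin d))
    (hzhalf : ∀ i, zhalf i = prox (z i - γ • G i (z i)))
    (hzstep : ∀ i, z (i + 1) = prox (z i - γ • G i (zhalf i))) :
    ∀ t, ‖zhalf t - z 0‖ ^ 2
      ≤ (1 + n + n * γ ^ 2 * L ^ 2) *
          ∑ i ∈ Finset.range (t + 1), (1 + 1 / (n : ℝ)) ^ (2 * (t - i)) * ‖zhalf i - z i‖ ^ 2 := by
  intro t
  have hprox_lip : LipschitzWith 1 prox :=
    IsProximalMap.lipschitzWith_one hprox hγ hg_bot hg_top hg_convex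
  have hstep : ∀ i, ‖z (i + 1) - z i‖ ≤ (1 + γ * L) * ‖zhalf i - z i‖ := by
    intro i
    have hcorrector : ‖z (i + 1) - zhalf i‖ ≤ γ * L * ‖zhalf i - z i‖ := by
      simpa only [← hzstep, ← hzhalf] using
        norm_map_sub_smul_sub_le hprox_lip (hGLip i) hγ.le (z i) (zhalf i) (z i)
    linarith [norm_sub_le_norm_sub_add_norm_sub (z (i + 1)) (zhalf i) (z i)]
  have hn_pos : (0 : ℝ) < n := by exact_mod_cast hn
  calc ‖zhalf t - z 0‖ ^ 2
      ≤ (‖zhalf t - z t‖ + (1 + γ * L) * ∑ i ∈ range t, ‖zhalf i - z i‖) ^ 2 :=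
        pow_le_pow_left₀ (norm_nonneg _) (norm_sub_le_add_mul_sum_of_step_le z zhalf hstep t) 2
    _ ≤ (1 + n / 2 * (1 + γ * L) ^ 2) *
          ∑ i ∈ range (t + 1), (1 + 1 / (n : ℝ)) ^ (2 * (t - i)) * ‖zhalf i - z i‖ ^ 2 :=
        sq_add_mul_sum_range_le hn_pos _ (fun i => ‖zhalf i - z i‖) t
    _ ≤ _ := by
        refine mul_le_mul_of_nonneg_right ?_ (sum_nonneg fun i _ => by positivity)
        nlinarith [sq_nonneg (1 - γ * L)]

/-- Drift bound for extragradient iterates: if `z^{i+1/2} = prox_{γg}(z^i − γ G_i(z^i))`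
and `z^{i+1} = prox_{γg}(z^i − γ G_i(z^{i+1/2}))` with each `G_i` `L`-Lipschitz, then for all
`t`, `‖z^{t+1/2} − z^0‖² ≤ (1 + n + nγ²L²) ∑_{i=0}^t (1 + 1/n)^{2(t−i)} ‖z^{i+1/2} − z^i‖²`. -/
theorem extragradient_epoch_drift_bound
    (d n : ℕ) (hn : 1 ≤ n) (L γ : ℝ) (hγ : 0 < γ)
    (g : EuclideanSpace ℝ (Fin d) → EReal)
    (hg_bot : ∀ x, g x ≠ ⊥) (hg_top : ∃ x, g x ≠ ⊤)
    (hg_convex : ∀ (x y : EuclideanSpace ℝ (Fin d)) (a b : ℝ), 0 ≤ a → 0 ≤ b → a + b = 1 →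
      g (a • x + b • y) ≤ (a : EReal) * g x + (b : EReal) * g y)
    (hg_lsc : LowerSemicontinuous g)
    (prox : EuclideanSpace ℝ (Fin d) → EuclideanSpace ℝ (Fin d))
    (hprox : ∀ x y : EuclideanSpace ℝ (Fin d),
      (γ : EReal) * g (prox x) + ((‖prox x - x‖ ^ 2 / 2 : ℝ) : EReal)
        ≤ (γ : EReal) * g y + ((‖y - x‖ ^ 2 / 2 : ℝ) : EReal))
    (G : ℕ → EuclideanSpace ℝ (Fin d) → EuclideanSpace ℝ (Fin d))
    (hGLip : ∀ (i : ℕ) (z₁ z₂ : EuclideanSpace ℝ (Fin d)), ‖G i z₁ - G i z₂‖ ≤ L * ‖z₁ - z₂‖)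
    (z zhalf : ℕ → EuclideanSpace ℝ (Fin d))
    (hzhalf : ∀ i, zhalf i = prox (z i - γ • G i (z i)))
    (hzstep : ∀ i, z (i + 1) = prox (z i - γ • G i (zhalf i))) :
    ∀ t, ‖zhalf t - z 0‖ ^ 2
      ≤ (1 + n + n * γ ^ 2 * L ^ 2) *
          ∑ i ∈ Finset.range (t + 1), (1 + 1 / (n : ℝ)) ^ (2 * (t - i)) * ‖zhalf i - z i‖ ^ 2 :=
  extragradient_epoch_drift_bound_general d n hn L γ hγ g hg_bot hg_top hg_convex prox hprox G hGLip
    z zhalf hzhalf hzstep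
end

section
/- Let F_1,…,F_n : ℝ^d → ℝ^d each be μ-strongly monotone, with (1/n)∑_{i=1}^n ‖F_i(z*)‖² ≤ σ*² and ‖F(z*)‖² ≤ σ*², where F = (1/n)∑_i F_i and z* solves the variational inequality for (F, g) with g(z*) < +∞. Let J be a random index uniformly distributed on {1,…,n}, let z^0 be a random vector in ℝ^d independent of J, and let w be any random vector in ℝ^d (possibly depending on J and z^0) such that all expectations below are finite. Then for every γ > 0 and β > 0: E[ ⟨F_J(w), w − z*⟩ + g(w) − g(z*) ] ≥ μ E‖w − z*‖² − (γ/β) σ*² − (β/γ) E‖w − z^0‖². -/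
/-!
Strong monotonicity of `F_J` between `w` and `z*`, together with the variational inequality
at `w`, bounds the integrand below by `μ‖w − z*‖² + ⟪a_J, w − z*⟫`, where
`a_i = F_i(z*) − F(z*)`. Split `w − z* = (w − z⁰) + (z⁰ − z*)`: the first part is handled by
Young's inequality, and the second has zero mean because `J` is uniform and independent of
`z⁰` while the `a_i` average to zero. Finally `E‖a_J‖²`, the variance of `F_J(z*)`, is at most
its second moment `(1/n) ∑ ‖F_i(z*)‖² ≤ σ*²`.
-/

open scoped RealInnerProductSpace
open MeasureTheory ProbabilityTheory

theorem EReal.toReal_le_coe_add_toReal {x y : EReal} {r : ℝ} (h : x ≤ r + y) (hx : x ≠ ⊥)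
    (hy : y ≠ ⊤) (hy' : y ≠ ⊥) : x.toReal ≤ r + y.toReal := by
  have := toReal_le_toReal h hx (add_lt_top (coe_ne_top r) hy).ne
  rwa [toReal_add (coe_ne_top r) (coe_ne_bot r) hy hy', toReal_coe] at this

section InnerProductSpace

variable {E : Type*} [NormedAddCommGroup E] [InnerProductSpace ℝ E]

theorem neg_real_inner_le_young {c : ℝ} (hc : 0 < c) (x y : E) :
    -⟪x, y⟫ ≤ c * ‖x‖ ^ 2 + (4 * c)⁻¹ * ‖y‖ ^ 2 := by
  have h := norm_add_sq_real ((2 * c) • x) y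
  rw [norm_smul, real_inner_smul_left, Real.norm_of_nonneg (by positivity)] at h
  calc -⟪x, y⟫ = c * ‖x‖ ^ 2 + (4 * c)⁻¹ * ‖y‖ ^ 2 - ‖(2 * c) • x + y‖ ^ 2 / (4 * c) := by
        rw [h]; field_simp; ring
    _ ≤ _ := sub_le_self _ (by positivity)

variable {ι : Type*} [Fintype ι]

theorem sum_sub_average_eq_zero (a : ι → E) :
    ∑ i, (a i - (Fintype.card ι : ℝ)⁻¹ • ∑ j, a j) = 0 := by
  rcases isEmpty_or_nonempty ι with hι | hι
  · simp
  rw [Finset.sum_sub_distrib, Finset.sum_const, Finset.card_univ, ← Nat.cast_smul_eq_nsmul ℝ,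
    smul_inv_smul₀ (by positivity), sub_self]

theorem sum_norm_sub_average_sq_le (a : ι → E) :
    ∑ i, ‖a i - (Fintype.card ι : ℝ)⁻¹ • ∑ j, a j‖ ^ 2 ≤ ∑ i, ‖a i‖ ^ 2 := by
  set m := (Fintype.card ι : ℝ)⁻¹ • ∑ j, a j
  have hsum : ∑ i, ⟪a i, m⟫ = Fintype.card ι * ‖m‖ ^ 2 := by
    rcases eq_or_ne (Fintype.card ι : ℝ) 0 with h | h
    · simp [m, h]
    rw [← sum_inner, ← real_inner_self_eq_norm_sq, ← real_inner_smul_left, smul_inv_smul₀ h]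
  simp only [norm_sub_sq_real, Finset.sum_add_distrib, Finset.sum_sub_distrib, ← Finset.mul_sum,
    hsum, Finset.sum_const, Finset.card_univ, nsmul_eq_mul]
  nlinarith [sq_nonneg ‖m‖, (Nat.cast_nonneg (Fintype.card ι) : (0:ℝ) ≤ _)]

theorem strongMonotone_vi_gap_lower_bound {T : E → E} {g : E → EReal} {μ c : ℝ}
    (hc : 0 < c) {v z u w : E} (hT : μ * ‖w - z‖ ^ 2 ≤ ⟪T w - T z, w - z⟫)
    (hVI : g z ≤ ((⟪v, w - z⟫ : ℝ) : EReal) + g w)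
    (hgw : g w ≠ ⊤) (hgw' : g w ≠ ⊥) (hgz : g z ≠ ⊥) :
    μ * ‖w - z‖ ^ 2 - c * ‖T z - v‖ ^ 2 - (4 * c)⁻¹ * ‖w - u‖ ^ 2 + ⟪T z - v, u - z⟫
      ≤ ⟪T w, w - z⟫ + (g w).toReal - (g z).toReal := by
  have hg := EReal.toReal_le_coe_add_toReal hVI hgz hgw hgw'
  have hY := neg_real_inner_le_young hc (T z - v) (w - u)
  have hsplit : ⟪T w, w - z⟫
      = ⟪T w - T z, w - z⟫ + ⟪T z - v, w - u⟫ + ⟪T z - v, u - z⟫ + ⟪v, w - z⟫ := by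
    simp only [inner_sub_left, inner_sub_right]; ring
  linarith

end InnerProductSpace

section Probability

variable {Ω E ι : Type*} {mΩ : MeasurableSpace Ω} {P : Measure Ω} [IsFiniteMeasure P]
  [NormedAddCommGroup E]

theorem integrable_sub_of_integrable_norm_sub_sq {w x y : Ω → E}
    (hx : AEStronglyMeasurable (fun ω => w ω - x ω) P)
    (hy : AEStronglyMeasurable (fun ω => w ω - y ω) P)
    (hwx : Integrable (fun ω => ‖w ω - x ω‖ ^ 2) P)
    (hwy : Integrable (fun ω => ‖w ω - y ω‖ ^ 2) P) :
    Integrable (fun ω => y ω - x ω) P := by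
  have hmx := (memLp_two_iff_integrable_sq_norm hx).2 hwx
  have hmy := (memLp_two_iff_integrable_sq_norm hy).2 hwy
  refine ((hmx.sub hmy).integrable one_le_two).congr (ae_of_all _ fun ω => ?_)
  simp

variable [Fintype ι] [MeasurableSpace ι] [MeasurableSingletonClass ι] {J : Ω → ι}

theorem integral_comp_of_uniform [NormedSpace ℝ E] [CompleteSpace E] (hJ : Measurable J)
    (hunif : ∀ i, P {ω | J ω = i} = (Fintype.card ι : ENNReal)⁻¹) (h : ι → E) :
    ∫ ω, h (J ω) ∂P = (Fintype.card ι : ℝ)⁻¹ • ∑ i, h i := by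
  rw [← integral_map hJ.aemeasurable Integrable.of_finite.aestronglyMeasurable,
    integral_fintype Integrable.of_finite, Finset.smul_sum]
  refine Finset.sum_congr rfl fun i _ => ?_
  rw [measureReal_def, Measure.map_apply hJ (measurableSet_singleton i)]
  simp [Set.preimage, hunif]

variable [InnerProductSpace ℝ E]

theorem integral_vi_gap_lower_bound [CompleteSpace E] {T : ι → E → E} {g : E → EReal}
    {μ c : ℝ} (hc : 0 < c) {v z : E} {u w : Ω → E} (hJ : Measurable J)
    (hT : ∀ i x, μ * ‖x - z‖ ^ 2 ≤ ⟪T i x - T i z, x - z⟫)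
    (hVI : ∀ x, g z ≤ ((⟪v, x - z⟫ : ℝ) : EReal) + g x) (hg : ∀ x, g x ≠ ⊥)
    (hgw : ∀ᵐ ω ∂P, g (w ω) ≠ ⊤)
    (hgap : Integrable (fun ω => ⟪T (J ω) (w ω), w ω - z⟫ + (g (w ω)).toReal) P)
    (hwz : Integrable (fun ω => ‖w ω - z‖ ^ 2) P) (hwu : Integrable (fun ω => ‖w ω - u ω‖ ^ 2) P)
    (hcross_int : Integrable (fun ω => ⟪T (J ω) z - v, u ω - z⟫) P) :
    μ * ∫ ω, ‖w ω - z‖ ^ 2 ∂P - c * ∫ ω, ‖T (J ω) z - v‖ ^ 2 ∂P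
        - (4 * c)⁻¹ * ∫ ω, ‖w ω - u ω‖ ^ 2 ∂P + ∫ ω, ⟪T (J ω) z - v, u ω - z⟫ ∂P
      ≤ ∫ ω, (⟪T (J ω) (w ω), w ω - z⟫ + (g (w ω)).toReal - (g z).toReal) ∂P := by
  have h₁ := hwz.const_mul μ
  have h₂ : Integrable (fun ω => c * ‖T (J ω) z - v‖ ^ 2) P :=
    (Integrable.of_finite.comp_measurable (g := fun i => ‖T i z - v‖ ^ 2) hJ).const_mul _
  have h₃ := hwu.const_mul (4 * c)⁻¹
  rw [← integral_const_mul, ← integral_const_mul, ← integral_const_mul,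
    ← integral_sub h₁ h₂, ← integral_sub (by exact h₁.sub h₂) h₃,
    ← integral_add (by exact (h₁.sub h₂).sub h₃) hcross_int]
  refine integral_mono_ae (((h₁.sub h₂).sub h₃).add hcross_int) (hgap.sub (integrable_const _)) ?_
  filter_upwards [hgw] with ω hω
  exact strongMonotone_vi_gap_lower_bound hc (hT _ _) (hVI _) hω (hg _) (hg _)

theorem integral_norm_sq_comp_sub_average_le (hJ : Measurable J)
    (hunif : ∀ i, P {ω | J ω = i} = (Fintype.card ι : ENNReal)⁻¹) (a : ι → E) :
    ∫ ω, ‖a (J ω) - (Fintype.card ι : ℝ)⁻¹ • ∑ j, a j‖ ^ 2 ∂P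
      ≤ (Fintype.card ι : ℝ)⁻¹ * ∑ i, ‖a i‖ ^ 2 := by
  rw [integral_comp_of_uniform hJ hunif (fun i => ‖a i - _‖ ^ 2), smul_eq_mul]
  exact mul_le_mul_of_nonneg_left (sum_norm_sub_average_sq_le a) (by positivity)

namespace ProbabilityTheory

variable [MeasurableSpace E] [BorelSpace E] {V : Ω → E}

theorem IndepFun.integrable_inner_comp (hJV : IndepFun J V P) (hJ : Measurable J)
    (hV : Integrable V P) (a : ι → E) : Integrable (fun ω => ⟪a (J ω), V ω⟫) P :=
  (hJV.comp (measurable_of_finite a) measurable_id).integrable_bilin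
    (Integrable.of_finite.comp_measurable hJ) hV (innerSL ℝ)

theorem IndepFun.integral_inner_comp [CompleteSpace E] (hJV : IndepFun J V P)
    (hJ : Measurable J) (hV : Integrable V P) (a : ι → E) :
    ∫ ω, ⟪a (J ω), V ω⟫ ∂P = ⟪∫ ω, a (J ω) ∂P, ∫ ω, V ω ∂P⟫ :=
  (hJV.comp (measurable_of_finite a) measurable_id).integral_bilin
    (Integrable.of_finite.comp_measurable hJ) hV (innerSL ℝ)

theorem IndepFun.integral_inner_comp_eq_zero [CompleteSpace E] (hJV : IndepFun J V P)
    (hJ : Measurable J) (hunif : ∀ i, P {ω | J ω = i} = (Fintype.card ι : ENNReal)⁻¹)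
    (hV : Integrable V P) {a : ι → E} (ha : ∑ i, a i = 0) :
    ∫ ω, ⟪a (J ω), V ω⟫ ∂P = 0 := by
  rw [hJV.integral_inner_comp hJ hV, integral_comp_of_uniform hJ hunif, ha, smul_zero,
    inner_zero_left]

end ProbabilityTheory

end Probability

theorem expected_operator_lower_bound_general
    (d n : ℕ) (μ γ β σstar : ℝ) (hγ : 0 < γ) (hβ : 0 < β)
    (F : Fin n → EuclideanSpace ℝ (Fin d) → EuclideanSpace ℝ (Fin d))
    (hmono : ∀ (i : Fin n) (z₁ z₂ : EuclideanSpace ℝ (Fin d)),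
      μ * ‖z₁ - z₂‖ ^ 2 ≤ ⟪F i z₁ - F i z₂, z₁ - z₂⟫)
    (g : EuclideanSpace ℝ (Fin d) → EReal)
    (hg_bot : ∀ x, g x ≠ ⊥)
    (zstar : EuclideanSpace ℝ (Fin d))
    (hVI : ∀ z, g zstar ≤ ((⟪(n : ℝ)⁻¹ • ∑ i, F i zstar, z - zstar⟫ : ℝ) : EReal) + g z)
    (hvar1 : (n : ℝ)⁻¹ * ∑ i, ‖F i zstar‖ ^ 2 ≤ σstar ^ 2)
    (Ω : Type*) [MeasureSpace Ω] [IsProbabilityMeasure (ℙ : Measure Ω)]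
    (J : Ω → Fin n) (z0 w : Ω → EuclideanSpace ℝ (Fin d))
    (hJmeas : Measurable J) (hz0meas : Measurable z0) (hwmeas : Measurable w)
    (hJunif : ∀ i : Fin n, ℙ {ω | J ω = i} = (n : ENNReal)⁻¹)
    (hindep : IndepFun J z0 ℙ)
    (hgw_fin : ∀ᵐ ω ∂ℙ, g (w ω) ≠ ⊤)
    (hint1 : Integrable fun ω => ⟪F (J ω) (w ω), w ω - zstar⟫)
    (hint2 : Integrable fun ω => (g (w ω)).toReal)
    (hint3 : Integrable fun ω => ‖w ω - zstar‖ ^ 2)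
    (hint4 : Integrable fun ω => ‖w ω - z0 ω‖ ^ 2) :
    μ * (∫ ω, ‖w ω - zstar‖ ^ 2) - (γ / β) * σstar ^ 2
        - (β / γ) * (∫ ω, ‖w ω - z0 ω‖ ^ 2)
      ≤ ∫ ω, (⟪F (J ω) (w ω), w ω - zstar⟫ + (g (w ω)).toReal - (g zstar).toReal) := by
  set a := fun i => F i zstar - (n : ℝ)⁻¹ • ∑ j, F j zstar
  have hunif : ∀ i, ℙ {ω | J ω = i} = (Fintype.card (Fin n) : ENNReal)⁻¹ := by
    simpa using hJunif
  have hV : Integrable fun ω => z0 ω - zstar :=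
    integrable_sub_of_integrable_norm_sub_sq (x := fun _ => zstar) (by fun_prop) (by fun_prop)
      hint3 hint4
  have hJV : IndepFun J (fun ω => z0 ω - zstar) ℙ :=
    hindep.comp measurable_id (measurable_sub_const _)
  have hcross : ∫ ω, ⟪a (J ω), z0 ω - zstar⟫ = 0 :=
    hJV.integral_inner_comp_eq_zero hJmeas hunif hV
      (by simpa only [Fintype.card_fin] using sum_sub_average_eq_zero fun i => F i zstar)
  have hsecond : ∫ ω, ‖a (J ω)‖ ^ 2 ≤ σstar ^ 2 :=
    le_trans (by simpa only [Fintype.card_fin] using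
      integral_norm_sq_comp_sub_average_le hJmeas hunif fun i => F i zstar) hvar1
  have hmain := integral_vi_gap_lower_bound (div_pos hγ hβ) hJmeas (hmono · · zstar) hVI hg_bot
    hgw_fin (hint1.add hint2) hint3 hint4 (hJV.integrable_inner_comp hJmeas hV a)
  have hB : 0 ≤ ∫ ω, ‖w ω - z0 ω‖ ^ 2 := integral_nonneg fun _ => by positivity
  have hc : (4 * (γ / β))⁻¹ ≤ β / γ := by rw [mul_inv, inv_div]; linarith [div_pos hβ hγ]
  rw [hcross] at hmain
  linarith [mul_le_mul_of_nonneg_left hsecond (div_pos hγ hβ).le,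
    mul_le_mul_of_nonneg_right hc hB]

/-- Lower bound on `E[⟨F_J(w), w − z*⟩ + g(w) − g(z*)]` for a uniformly random index `J`
independent of `z⁰`, where each `F_i` is `μ`-strongly monotone, the variance at the optimum
is bounded by `σ*²`, and `z*` solves the variational inequality for `(F, g)`:
`E[⟨F_J(w), w − z*⟩ + g(w) − g(z*)] ≥ μ E‖w − z*‖² − (γ/β)σ*² − (β/γ)E‖w − z⁰‖²`. -/
theorem expected_operator_lower_bound
    (d n : ℕ) (hn : 0 < n) (μ γ β σstar : ℝ) (hμ : 0 < μ) (hγ : 0 < γ) (hβ : 0 < β)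
    (F : Fin n → EuclideanSpace ℝ (Fin d) → EuclideanSpace ℝ (Fin d))
    (hmono : ∀ (i : Fin n) (z₁ z₂ : EuclideanSpace ℝ (Fin d)),
      μ * ‖z₁ - z₂‖ ^ 2 ≤ ⟪F i z₁ - F i z₂, z₁ - z₂⟫)
    (g : EuclideanSpace ℝ (Fin d) → EReal)
    (hg_bot : ∀ x, g x ≠ ⊥) (hg_top : ∃ x, g x ≠ ⊤)
    (hg_convex : ∀ (x y : EuclideanSpace ℝ (Fin d)) (a b : ℝ), 0 ≤ a → 0 ≤ b → a + b = 1 →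
      g (a • x + b • y) ≤ (a : EReal) * g x + (b : EReal) * g y)
    (hg_lsc : LowerSemicontinuous g)
    (zstar : EuclideanSpace ℝ (Fin d)) (hzstar : g zstar ≠ ⊤)
    (hVI : ∀ z, g zstar ≤ ((⟪(n : ℝ)⁻¹ • ∑ i, F i zstar, z - zstar⟫ : ℝ) : EReal) + g z)
    (hvar1 : (n : ℝ)⁻¹ * ∑ i, ‖F i zstar‖ ^ 2 ≤ σstar ^ 2)
    (hvar2 : ‖(n : ℝ)⁻¹ • ∑ i, F i zstar‖ ^ 2 ≤ σstar ^ 2)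
    (Ω : Type*) [MeasureSpace Ω] [IsProbabilityMeasure (ℙ : Measure Ω)]
    (J : Ω → Fin n) (z0 w : Ω → EuclideanSpace ℝ (Fin d))
    (hJmeas : Measurable J) (hz0meas : Measurable z0) (hwmeas : Measurable w)
    (hJunif : ∀ i : Fin n, ℙ {ω | J ω = i} = (n : ENNReal)⁻¹)
    (hindep : IndepFun J z0 ℙ)
    (hgw_fin : ∀ᵐ ω ∂ℙ, g (w ω) ≠ ⊤)
    (hint1 : Integrable fun ω => ⟪F (J ω) (w ω), w ω - zstar⟫)
    (hint2 : Integrable fun ω => (g (w ω)).toReal)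
    (hint3 : Integrable fun ω => ‖w ω - zstar‖ ^ 2)
    (hint4 : Integrable fun ω => ‖w ω - z0 ω‖ ^ 2) :
    μ * (∫ ω, ‖w ω - zstar‖ ^ 2) - (γ / β) * σstar ^ 2
        - (β / γ) * (∫ ω, ‖w ω - z0 ω‖ ^ 2)
      ≤ ∫ ω, (⟪F (J ω) (w ω), w ω - zstar⟫ + (g (w ω)).toReal - (g zstar).toReal) :=
  expected_operator_lower_bound_general d n μ γ β σstar hγ hβ F hmono g hg_bot zstar hVI hvar1 Ω J
    z0 w hJmeas hz0meas hwmeas hJunif hindep hgw_fin hint1 hint2 hint3 hint4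
end

section
/- Let g : ℝ^d → ℝ ∪ {+∞} be proper convex lower semicontinuous, let F_1,…,F_n : ℝ^d → ℝ^d each be L-Lipschitz and μ-strongly monotone (so 0 < μ ≤ L), F = (1/n)∑_i F_i, and let z* solve the variational inequality for (F, g). Fix α ∈ (0,1) and γ > 0 with γ ≤ (1−α)μ/(6L²) and α ≥ γμ/2, an index i ∈ {1,…,n}, and points z, ω ∈ ℝ^d. Define z̄ = α z + (1−α) ω, z^{1/2} = prox_{γg}(z̄ − γ F(ω)), F̂ = F_i(z^{1/2}) − F_i(ω) + F(ω), and z⁺ = prox_{γg}(z̄ − γ F̂). Then: ‖z⁺ − z*‖² ≤ (α − γμ/4)‖z − z*‖² + (1 − α − γμ/4)‖ω − z*‖². -/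
open scoped RealInnerProductSpace

/-!
Adding the optimality conditions of the two prox steps to the variational inequality at `z*`
(tested at `z½`) cancels the values of `g` and leaves
`‖z⁺ - z*‖² + ‖z⁺ - z½‖² + ‖z½ - z̄‖²`
`  ≤ ‖z̄ - z*‖² + 2γ (⟪F̂ - F ω, z½ - z⁺⟫ - ⟪F̂ - F z*, z½ - z*⟫)`.
The first inner product is at most `L ‖z½ - ω‖ ‖z½ - z⁺‖` and is absorbed by `‖z⁺ - z½‖²`.
In the second, `F̂ - F z* = (F z½ - F z*) + (F_i z½ - F_i ω - (F z½ - F ω))`: strong monotonicity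
of the average `F` gives `μ ‖z½ - z*‖²`, and the variance term has norm at most `2L ‖z½ - ω‖`.
After Young's inequality, the surviving `-γμ ‖z½ - z*‖²` is traded for
`-γμ/4 (‖z - z*‖² + ‖ω - z*‖²)`, while `‖z̄ - z*‖² - ‖z½ - z̄‖²` is rewritten through
`‖α z + (1 - α) ω - x‖² = α ‖z - x‖² + (1 - α) ‖ω - x‖² - α (1 - α) ‖z - ω‖²`; the step-size
conditions make the leftover multiples of `‖z½ - z‖²` and `‖z½ - ω‖²` nonpositive.
-/

theorem EReal.toReal_sub_toReal_le {a b : EReal} {r : ℝ} (ha : a ≠ ⊥) (hb : b ≠ ⊥) (hb' : b ≠ ⊤)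
    (h : a ≤ r + b) : a.toReal - b.toReal ≤ r := by
  lift b to ℝ using ⟨hb', hb⟩
  lift a to ℝ using ⟨ne_top_of_le_ne_top (by exact_mod_cast EReal.coe_ne_top (r + b)) h, ha⟩
  rw [EReal.toReal_coe, EReal.toReal_coe]
  linarith [(by exact_mod_cast h : a ≤ r + b)]

theorem le_of_forall_le_add_mul {a b c : ℝ} (h : ∀ t ∈ Set.Ioc (0 : ℝ) 1, a ≤ b + t * c) :
    a ≤ b := by
  have hlim : Filter.Tendsto (fun t : ℝ => b + t * c) (nhdsWithin 0 (Set.Ioi 0)) (nhds b) := by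
    have : Continuous fun t : ℝ => b + t * c := by fun_prop
    simpa using (this.tendsto 0).mono_left nhdsWithin_le_nhds
  exact ge_of_tendsto hlim (Filter.mem_of_superset (Ioc_mem_nhdsGT one_pos) h)

theorem norm_sub_sq_le_two_mul_add {E : Type*} [SeminormedAddCommGroup E] (x y z : E) :
    ‖x - z‖ ^ 2 ≤ 2 * ‖x - y‖ ^ 2 + 2 * ‖y - z‖ ^ 2 := by
  nlinarith [norm_sub_le_norm_sub_add_norm_sub x y z, norm_nonneg (x - z),
    sq_nonneg (‖x - y‖ - ‖y - z‖)]

section Prox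

variable {E : Type*} [NormedAddCommGroup E] {γ : ℝ} {g : E → EReal} {prox : E → E}

def IsProxMap (γ : ℝ) (g : E → EReal) (prox : E → E) : Prop :=
  ∀ x y : E, (γ : EReal) * g (prox x) + ((‖prox x - x‖ ^ 2 / 2 : ℝ) : EReal)
    ≤ (γ : EReal) * g y + ((‖y - x‖ ^ 2 / 2 : ℝ) : EReal)

theorem IsProxMap.ne_top (hprox : IsProxMap γ g prox) (hγ : 0 < γ) (hg_bot : ∀ x, g x ≠ ⊥)
    {y : E} (hy : g y ≠ ⊤) (x : E) : g (prox x) ≠ ⊤ := by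
  intro htop
  have h := hprox x y
  rw [htop, EReal.coe_mul_top_of_pos hγ, EReal.top_add_coe, top_le_iff,
    ← EReal.coe_toReal hy (hg_bot y)] at h
  norm_cast at h
  exact EReal.coe_ne_top _ h

theorem IsProxMap.mul_sub_le_inner [InnerProductSpace ℝ E] (hprox : IsProxMap γ g prox)
    (hγ : 0 < γ) (hg_bot : ∀ x, g x ≠ ⊥)
    (hg_convex : ∀ (x y : E) (a b : ℝ), 0 ≤ a → 0 ≤ b → a + b = 1 →
      g (a • x + b • y) ≤ (a : EReal) * g x + (b : EReal) * g y)
    (x : E) {y : E} (hy : g y ≠ ⊤) :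
    γ * ((g (prox x)).toReal - (g y).toReal) ≤ ⟪prox x - x, y - prox x⟫ := by
  set p := prox x
  have hgp : g p = ((g p).toReal : EReal) :=
    (EReal.coe_toReal (hprox.ne_top hγ hg_bot hy x) (hg_bot p)).symm
  have hgy : g y = ((g y).toReal : EReal) := (EReal.coe_toReal hy (hg_bot y)).symm
  refine le_of_forall_le_add_mul (c := ‖y - p‖ ^ 2 / 2) fun t ⟨ht0, ht1⟩ => ?_
  have hconv : g ((1 - t) • p + t • y)
      ≤ (((1 - t) * (g p).toReal + t * (g y).toReal : ℝ) : EReal) := by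
    have h := hg_convex p y (1 - t) t (by linarith) ht0.le (by ring)
    rw [hgp, hgy] at h
    exact_mod_cast h
  have hmin : γ * (g p).toReal + ‖p - x‖ ^ 2 / 2
      ≤ γ * ((1 - t) * (g p).toReal + t * (g y).toReal)
        + ‖(1 - t) • p + t • y - x‖ ^ 2 / 2 := by
    have h := (hprox x ((1 - t) • p + t • y)).trans
      (add_le_add_left (mul_le_mul_of_nonneg_left hconv (EReal.coe_nonneg.2 hγ.le)) _)
    rw [hgp] at h
    exact_mod_cast h
  have hexpand : ‖(1 - t) • p + t • y - x‖ ^ 2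
      = ‖p - x‖ ^ 2 + 2 * t * ⟪p - x, y - p⟫ + t ^ 2 * ‖y - p‖ ^ 2 := by
    rw [show (1 - t) • p + t • y - x = (p - x) + t • (y - p) by module, norm_add_sq_real,
      real_inner_smul_right, norm_smul, mul_pow, Real.norm_eq_abs, sq_abs]
    ring
  have h : t * (γ * ((g p).toReal - (g y).toReal))
      ≤ t * (⟪p - x, y - p⟫ + t * (‖y - p‖ ^ 2 / 2)) := by
    nlinarith
  exact le_of_mul_le_mul_left h ht0

end Prox

section InnerProductSpace

variable {E : Type*} [NormedAddCommGroup E] [InnerProductSpace ℝ E]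

theorem two_mul_real_inner_sub_sub (a b c : E) :
    2 * ⟪a - b, c - a⟫ = ‖c - b‖ ^ 2 - ‖a - b‖ ^ 2 - ‖c - a‖ ^ 2 := by
  rw [show c - b = (c - a) + (a - b) by abel, norm_add_sq_real, real_inner_comm]
  ring

theorem norm_smul_add_one_sub_smul_sub_sq (a : ℝ) (x y z : E) :
    ‖a • x + (1 - a) • y - z‖ ^ 2
      = a * ‖x - z‖ ^ 2 + (1 - a) * ‖y - z‖ ^ 2 - a * (1 - a) * ‖x - y‖ ^ 2 := by
  have hx : x - z = (a • x + (1 - a) • y - z) + (1 - a) • (x - y) := by module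
  have hy : y - z = (a • x + (1 - a) • y - z) + (-a) • (x - y) := by module
  rw [hx, hy, norm_add_sq_real, norm_add_sq_real, real_inner_smul_right, real_inner_smul_right,
    norm_smul, norm_smul, mul_pow, mul_pow, Real.norm_eq_abs, Real.norm_eq_abs, sq_abs, sq_abs]
  ring

/-- `hp` and `hh` are the optimality conditions of `zp = prox (zbar - γ • B)` against `zs` and of
`zh = prox (zbar - γ • A)` against `zp`, and `hs` is the variational inequality with operator
value `C` at `zs`; `Gs`, `Gh`, `Gp` are the values of `g`. -/
theorem extragradient_norm_sq_le {γ Gs Gh Gp : ℝ} {zbar zh zp zs A B C : E} (hγ : 0 ≤ γ)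
    (hp : γ * (Gp - Gs) ≤ ⟪zp - (zbar - γ • B), zs - zp⟫)
    (hh : γ * (Gh - Gp) ≤ ⟪zh - (zbar - γ • A), zp - zh⟫)
    (hs : Gs - Gh ≤ ⟪C, zh - zs⟫) :
    ‖zp - zs‖ ^ 2 + ‖zp - zh‖ ^ 2 + ‖zh - zbar‖ ^ 2
      ≤ ‖zbar - zs‖ ^ 2 + 2 * γ * (⟪B - A, zh - zp⟫ - ⟪B - C, zh - zs⟫) := by
  have hsplit (u v w : E) :
      ⟪u - (zbar - γ • v), w - u⟫ = ⟪u - zbar, w - u⟫ + γ * ⟪v, w - u⟫ := by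
    rw [show u - (zbar - γ • v) = (u - zbar) + γ • v by abel, inner_add_left,
      real_inner_smul_left]
  have hinner : γ * ⟪B, zs - zp⟫ + γ * ⟪A, zp - zh⟫ + γ * ⟪C, zh - zs⟫
      = γ * (⟪B - A, zh - zp⟫ - ⟪B - C, zh - zs⟫) := by
    simp only [inner_sub_left, inner_sub_right]
    ring
  rw [hsplit] at hp hh
  have hthree_s := two_mul_real_inner_sub_sub zp zbar zs
  have hthree_p := two_mul_real_inner_sub_sub zh zbar zp
  rw [norm_sub_rev zs zp, norm_sub_rev zs zbar] at hthree_s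
  linear_combination 2 * hp + 2 * hh + 2 * mul_le_mul_of_nonneg_left hs hγ + hthree_s
    + hthree_p + 2 * hinner

theorem inner_vrEstimator_sub_le {G Φ : E → E} {L μ : ℝ}
    (hG : ∀ x y, ‖G x - G y‖ ≤ L * ‖x - y‖) (hΦ : ∀ x y, ‖Φ x - Φ y‖ ≤ L * ‖x - y‖)
    (hΦmono : ∀ x y, μ * ‖x - y‖ ^ 2 ≤ ⟪Φ x - Φ y, x - y⟫) {ω zh Fhat : E}
    (hFhat : Fhat = G zh - G ω + Φ ω) (zp zs : E) :
    ⟪Fhat - Φ ω, zh - zp⟫ - ⟪Fhat - Φ zs, zh - zs⟫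
      ≤ L * ‖zh - ω‖ * ‖zh - zp‖ + 2 * L * ‖zh - ω‖ * ‖zh - zs‖ - μ * ‖zh - zs‖ ^ 2 := by
  have hdrift : Fhat - Φ ω = G zh - G ω := by rw [hFhat]; abel
  have hnoise : Fhat - Φ zs = (Φ zh - Φ zs) + ((G zh - G ω) - (Φ zh - Φ ω)) := by
    rw [hFhat]; abel
  have hnoise_le : ‖(G zh - G ω) - (Φ zh - Φ ω)‖ ≤ 2 * L * ‖zh - ω‖ := by
    linarith [norm_sub_le (G zh - G ω) (Φ zh - Φ ω), hG zh ω, hΦ zh ω]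
  have hdrift_le : ⟪G zh - G ω, zh - zp⟫ ≤ L * ‖zh - ω‖ * ‖zh - zp‖ :=
    (real_inner_le_norm _ _).trans (mul_le_mul_of_nonneg_right (hG zh ω) (norm_nonneg _))
  have hnoise_ge :
      -(2 * L * ‖zh - ω‖ * ‖zh - zs‖) ≤ ⟪(G zh - G ω) - (Φ zh - Φ ω), zh - zs⟫ :=
    (neg_le_neg (mul_le_mul_of_nonneg_right hnoise_le (norm_nonneg _))).trans
      (neg_le_of_abs_le (abs_real_inner_le_norm _ _))
  rw [hdrift, hnoise, inner_add_left]
  linarith [hΦmono zh zs]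

section Average

variable {ι : Type*} [Fintype ι] [Nonempty ι]

theorem norm_avg_sub_avg_le {F : ι → E → E} {L : ℝ}
    (hLip : ∀ i x y, ‖F i x - F i y‖ ≤ L * ‖x - y‖) (x y : E) :
    ‖(Fintype.card ι : ℝ)⁻¹ • ∑ j, F j x - (Fintype.card ι : ℝ)⁻¹ • ∑ j, F j y‖
      ≤ L * ‖x - y‖ := by
  have hcard : (0 : ℝ) < Fintype.card ι := by exact_mod_cast Fintype.card_pos
  rw [← smul_sub, ← Finset.sum_sub_distrib, norm_smul, norm_inv, RCLike.norm_natCast,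
    inv_mul_le_iff₀ hcard]
  simpa using norm_sum_le_of_le Finset.univ fun j _ => hLip j x y

theorem mul_norm_sub_sq_le_inner_avg_sub_avg {F : ι → E → E} {μ : ℝ}
    (hmono : ∀ i x y, μ * ‖x - y‖ ^ 2 ≤ ⟪F i x - F i y, x - y⟫) (x y : E) :
    μ * ‖x - y‖ ^ 2
      ≤ ⟪(Fintype.card ι : ℝ)⁻¹ • ∑ j, F j x - (Fintype.card ι : ℝ)⁻¹ • ∑ j, F j y, x - y⟫ := by
  have hcard : (0 : ℝ) < Fintype.card ι := by exact_mod_cast Fintype.card_pos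
  rw [← smul_sub, ← Finset.sum_sub_distrib, real_inner_smul_left, sum_inner,
    le_inv_mul_iff₀ hcard]
  simpa using Finset.sum_le_sum fun j (_ : j ∈ Finset.univ) => hmono j x y

end Average

theorem norm_sub_sq_le_of_extragradient_energy {z ω zh zp zs : E} {α k f : ℝ} (hk : 0 < k)
    (hkα : k ≤ 2 * α) (hk1 : k ≤ (1 - α) / 6) (hf : f ^ 2 ≤ k * (1 - α) / 6)
    (h : ‖zp - zs‖ ^ 2 + ‖zp - zh‖ ^ 2 + ‖zh - (α • z + (1 - α) • ω)‖ ^ 2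
      ≤ ‖α • z + (1 - α) • ω - zs‖ ^ 2 + 2 * f * ‖zh - ω‖ * ‖zh - zp‖
        + 4 * f * ‖zh - ω‖ * ‖zh - zs‖ - 2 * k * ‖zh - zs‖ ^ 2) :
    ‖zp - zs‖ ^ 2 ≤ (α - k / 4) * ‖z - zs‖ ^ 2 + (1 - α - k / 4) * ‖ω - zs‖ ^ 2 := by
  set a := ‖zh - ω‖
  set b := ‖zh - zs‖
  have hyoung₁ : 2 * f * a * ‖zh - zp‖ - ‖zp - zh‖ ^ 2 ≤ f ^ 2 * a ^ 2 := by
    rw [norm_sub_rev zp zh]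
    nlinarith [sq_nonneg (f * a - ‖zh - zp‖)]
  have hyoung₂ : 4 * f * a * b ≤ k * b ^ 2 + 2 / 3 * (1 - α) * a ^ 2 := by
    refine le_of_mul_le_mul_left ?_ hk
    nlinarith [sq_nonneg (k * b - 2 * f * a), mul_le_mul_of_nonneg_right hf (sq_nonneg a)]
  have hbar_s := norm_smul_add_one_sub_smul_sub_sq α z ω zs
  have hbar_h := norm_smul_add_one_sub_smul_sub_sq α z ω zh
  have hk4 : 0 ≤ k / 4 := by positivity
  have hz := mul_le_mul_of_nonneg_left (norm_sub_sq_le_two_mul_add z zh zs) hk4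
  have hω := mul_le_mul_of_nonneg_left (norm_sub_sq_le_two_mul_add ω zh zs) hk4
  have hfa := mul_le_mul_of_nonneg_right hf (sq_nonneg a)
  have hcz : (k / 2 - α) * ‖z - zh‖ ^ 2 ≤ 0 :=
    mul_nonpos_of_nonpos_of_nonneg (by linarith) (sq_nonneg _)
  have hcω : (k / 2 + k * (1 - α) / 6 - (1 - α) / 3) * a ^ 2 ≤ 0 :=
    mul_nonpos_of_nonpos_of_nonneg (by nlinarith) (sq_nonneg _)
  rw [norm_sub_rev zh] at h
  rw [norm_sub_rev ω zh] at hbar_h hω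
  linarith

end InnerProductSpace

theorem extragradient_stepsize_bounds {L μ γ α : ℝ} (hμ : 0 < μ) (hγ : 0 < γ) (hμL : μ ≤ L)
    (hγle : γ ≤ (1 - α) * μ / (6 * L ^ 2)) :
    γ * μ ≤ (1 - α) / 6 ∧ (γ * L) ^ 2 ≤ γ * μ * (1 - α) / 6 := by
  have hL : 0 < L := hμ.trans_le hμL
  have hγL : γ * (6 * L ^ 2) ≤ (1 - α) * μ := (le_div_iff₀ (by positivity)).1 hγle
  constructor
  · nlinarith [mul_le_mul_of_nonneg_left (mul_le_mul hμL hμL hμ.le hL.le) hγ.le]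
  · nlinarith

theorem vr_extragradient_one_step_contraction_general
    (d n : ℕ) (L μ γ α : ℝ) (hμ : 0 < μ)
    (hγ : 0 < γ)
    (hμL : μ ≤ L) (hγle : γ ≤ (1 - α) * μ / (6 * L ^ 2)) (hαγ : γ * μ / 2 ≤ α)
    (g : EuclideanSpace ℝ (Fin d) → EReal)
    (hg_bot : ∀ x, g x ≠ ⊥)
    (hg_convex : ∀ (x y : EuclideanSpace ℝ (Fin d)) (a b : ℝ), 0 ≤ a → 0 ≤ b → a + b = 1 →
      g (a • x + b • y) ≤ (a : EReal) * g x + (b : EReal) * g y)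
    (prox : EuclideanSpace ℝ (Fin d) → EuclideanSpace ℝ (Fin d))
    (hprox : ∀ x y : EuclideanSpace ℝ (Fin d),
      (γ : EReal) * g (prox x) + ((‖prox x - x‖ ^ 2 / 2 : ℝ) : EReal)
        ≤ (γ : EReal) * g y + ((‖y - x‖ ^ 2 / 2 : ℝ) : EReal))
    (F : Fin n → EuclideanSpace ℝ (Fin d) → EuclideanSpace ℝ (Fin d))
    (hLip : ∀ (i : Fin n) (z₁ z₂ : EuclideanSpace ℝ (Fin d)),
      ‖F i z₁ - F i z₂‖ ≤ L * ‖z₁ - z₂‖)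
    (hmono : ∀ (i : Fin n) (z₁ z₂ : EuclideanSpace ℝ (Fin d)),
      μ * ‖z₁ - z₂‖ ^ 2 ≤ ⟪F i z₁ - F i z₂, z₁ - z₂⟫)
    (zstar : EuclideanSpace ℝ (Fin d)) (hzstar : g zstar ≠ ⊤)
    (hVI : ∀ z, g zstar ≤ ((⟪(n : ℝ)⁻¹ • ∑ j, F j zstar, z - zstar⟫ : ℝ) : EReal) + g z)
    (i : Fin n) (z ω zbar zhalf Fhat zplus : EuclideanSpace ℝ (Fin d))
    (hzbar : zbar = α • z + (1 - α) • ω)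
    (hzhalf : zhalf = prox (zbar - γ • ((n : ℝ)⁻¹ • ∑ j, F j ω)))
    (hFhat : Fhat = F i zhalf - F i ω + (n : ℝ)⁻¹ • ∑ j, F j ω)
    (hzplus : zplus = prox (zbar - γ • Fhat)) :
    ‖zplus - zstar‖ ^ 2
      ≤ (α - γ * μ / 4) * ‖z - zstar‖ ^ 2
        + (1 - α - γ * μ / 4) * ‖ω - zstar‖ ^ 2 := by
  have : Nonempty (Fin n) := ⟨i⟩
  have hΦLip : ∀ x y, ‖(n : ℝ)⁻¹ • ∑ j, F j x - (n : ℝ)⁻¹ • ∑ j, F j y‖ ≤ L * ‖x - y‖ := by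
    simpa only [Fintype.card_fin] using norm_avg_sub_avg_le hLip
  have hΦmono : ∀ x y,
      μ * ‖x - y‖ ^ 2 ≤ ⟪(n : ℝ)⁻¹ • ∑ j, F j x - (n : ℝ)⁻¹ • ∑ j, F j y, x - y⟫ := by
    simpa only [Fintype.card_fin] using mul_norm_sub_sq_le_inner_avg_sub_avg hmono
  obtain ⟨hk, hf⟩ := extragradient_stepsize_bounds hμ hγ hμL hγle
  replace hprox : IsProxMap γ g prox := hprox
  have hhalf_top : g zhalf ≠ ⊤ := hzhalf ▸ hprox.ne_top hγ hg_bot hzstar _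
  have hplus := hprox.mul_sub_le_inner hγ hg_bot hg_convex (zbar - γ • Fhat) hzstar
  have hhalf := hprox.mul_sub_le_inner hγ hg_bot hg_convex
    (zbar - γ • ((n : ℝ)⁻¹ • ∑ j, F j ω)) (hzplus ▸ hprox.ne_top hγ hg_bot hzstar _)
  rw [← hzplus] at hplus
  rw [← hzhalf] at hhalf
  have hsol := EReal.toReal_sub_toReal_le (hg_bot _) (hg_bot _) hhalf_top (hVI zhalf)
  have henergy := extragradient_norm_sq_le hγ.le hplus hhalf hsol
  have hops := inner_vrEstimator_sub_le (hLip i) hΦLip hΦmono hFhat zplus zstar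
  subst hzbar
  refine norm_sub_sq_le_of_extragradient_energy (zh := zhalf) (mul_pos hγ hμ) (by linarith)
    hk hf ?_
  linarith [mul_le_mul_of_nonneg_left hops (by positivity : (0 : ℝ) ≤ 2 * γ)]

/-- One step of variance-reduced extragradient with `γ ≤ (1−α)μ/(6L²)` and `α ≥ γμ/2`:
with `z̄ = αz + (1−α)ω`, `z½ = prox_{γg}(z̄ − γF(ω))`, `F̂ = F_i(z½) − F_i(ω) + F(ω)`,
`z⁺ = prox_{γg}(z̄ − γF̂)`, one has
`‖z⁺ − z*‖² ≤ (α − γμ/4)‖z − z*‖² + (1 − α − γμ/4)‖ω − z*‖²`. -/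
theorem vr_extragradient_one_step_contraction
    (d n : ℕ) (hn : 1 ≤ n) (L μ γ α : ℝ) (hL : 0 < L) (hμ : 0 < μ)
    (hγ : 0 < γ) (hα : α ∈ Set.Ioo (0 : ℝ) 1)
    (hμL : μ ≤ L) (hγle : γ ≤ (1 - α) * μ / (6 * L ^ 2)) (hαγ : γ * μ / 2 ≤ α)
    (g : EuclideanSpace ℝ (Fin d) → EReal)
    (hg_bot : ∀ x, g x ≠ ⊥) (hg_top : ∃ x, g x ≠ ⊤)
    (hg_convex : ∀ (x y : EuclideanSpace ℝ (Fin d)) (a b : ℝ), 0 ≤ a → 0 ≤ b → a + b = 1 →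
      g (a • x + b • y) ≤ (a : EReal) * g x + (b : EReal) * g y)
    (hg_lsc : LowerSemicontinuous g)
    (prox : EuclideanSpace ℝ (Fin d) → EuclideanSpace ℝ (Fin d))
    (hprox : ∀ x y : EuclideanSpace ℝ (Fin d),
      (γ : EReal) * g (prox x) + ((‖prox x - x‖ ^ 2 / 2 : ℝ) : EReal)
        ≤ (γ : EReal) * g y + ((‖y - x‖ ^ 2 / 2 : ℝ) : EReal))
    (F : Fin n → EuclideanSpace ℝ (Fin d) → EuclideanSpace ℝ (Fin d))
    (hLip : ∀ (i : Fin n) (z₁ z₂ : EuclideanSpace ℝ (Fin d)),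
      ‖F i z₁ - F i z₂‖ ≤ L * ‖z₁ - z₂‖)
    (hmono : ∀ (i : Fin n) (z₁ z₂ : EuclideanSpace ℝ (Fin d)),
      μ * ‖z₁ - z₂‖ ^ 2 ≤ ⟪F i z₁ - F i z₂, z₁ - z₂⟫)
    (zstar : EuclideanSpace ℝ (Fin d)) (hzstar : g zstar ≠ ⊤)
    (hVI : ∀ z, g zstar ≤ ((⟪(n : ℝ)⁻¹ • ∑ j, F j zstar, z - zstar⟫ : ℝ) : EReal) + g z)
    (i : Fin n) (z ω zbar zhalf Fhat zplus : EuclideanSpace ℝ (Fin d))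
    (hzbar : zbar = α • z + (1 - α) • ω)
    (hzhalf : zhalf = prox (zbar - γ • ((n : ℝ)⁻¹ • ∑ j, F j ω)))
    (hFhat : Fhat = F i zhalf - F i ω + (n : ℝ)⁻¹ • ∑ j, F j ω)
    (hzplus : zplus = prox (zbar - γ • Fhat)) :
    ‖zplus - zstar‖ ^ 2
      ≤ (α - γ * μ / 4) * ‖z - zstar‖ ^ 2
        + (1 - α - γ * μ / 4) * ‖ω - zstar‖ ^ 2 :=
  vr_extragradient_one_step_contraction_general d n L μ γ α hμ hγ hμL hγle hαγ g hg_bot hg_convex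
    prox hprox F hLip hmono zstar hzstar hVI i z ω zbar zhalf Fhat zplus hzbar hzhalf hFhat hzplus
end

section
/- Let γ, μ > 0 with q := 1 − γμ/2 ∈ (0,1), let c ≥ 0, let T ≥ 1 be an integer, and let a_0, a_1, …, a_T be nonnegative reals satisfying the weighted inequality ∑_{k=0}^{T−1} q^{−k} a_{k+1} ≤ (1 − γμ) ∑_{k=0}^{T−1} q^{−k} a_k + c ∑_{k=0}^{T−1} q^{−k}. Then a_T ≤ (1 − γμ/2)^T a_0 + 2c/(γμ). -/
/-! Weighting by `q⁻ᵏ` turns the shifted sum into `q` times the unshifted one plus the boundary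
terms `q (q⁻ᵀ a_T - a_0)`. Since the coefficient `1 - γμ` is at most `q` and the weighted sum of
the `a_k` is nonnegative, this leaves `q q⁻ᵀ a_T ≤ q a_0 + c ∑_{k<T} q⁻ᵏ`. The geometric sum is
`q (q⁻ᵀ - 1) / (1 - q)` with `1 - q = γμ/2`, and dividing by `q q⁻ᵀ` gives the rate. -/

open Finset

section WeightedSums

variable {K : Type*} [Field K]

theorem sum_range_inv_pow_mul_succ {q : K} (hq : q ≠ 0) (a : ℕ → K) (T : ℕ) :
    ∑ k ∈ range T, q⁻¹ ^ k * a (k + 1)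
      = q * (∑ k ∈ range T, q⁻¹ ^ k * a k + q⁻¹ ^ T * a T - a 0) := by
  have hshift : ∀ k, q⁻¹ ^ k * a (k + 1) = q * (q⁻¹ ^ (k + 1) * a (k + 1)) := fun k => by
    linear_combination -(q⁻¹ ^ k * a (k + 1)) * mul_inv_cancel₀ hq
  have htelescope := sum_range_sub (fun k => q⁻¹ ^ k * a k) T
  simp only [pow_zero, one_mul, sum_sub_distrib] at htelescope
  simp only [hshift, ← mul_sum]
  linear_combination q * htelescope

theorem one_sub_mul_geom_sum_inv {q : K} (hq : q ≠ 0) (T : ℕ) :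
    (1 - q) * ∑ k ∈ range T, q⁻¹ ^ k = q * (q⁻¹ ^ T - 1) := by
  linear_combination q * geom_sum_mul q⁻¹ T
    - (∑ k ∈ range T, q⁻¹ ^ k) * mul_inv_cancel₀ hq

end WeightedSums

theorem le_pow_mul_add_of_weighted_sum_le {q ρ c : ℝ} (hq0 : 0 < q) (hq1 : q < 1) (hρ : ρ ≤ q)
    (hc : 0 ≤ c) (T : ℕ) (a : ℕ → ℝ) (ha : ∀ k < T, 0 ≤ a k)
    (hsum : ∑ k ∈ range T, q⁻¹ ^ k * a (k + 1)
        ≤ ρ * ∑ k ∈ range T, q⁻¹ ^ k * a k + c * ∑ k ∈ range T, q⁻¹ ^ k) :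
    a T ≤ q ^ T * a 0 + c / (1 - q) := by
  set S := ∑ k ∈ range T, q⁻¹ ^ k * a k
  set G := ∑ k ∈ range T, q⁻¹ ^ k
  have hS : 0 ≤ S := sum_nonneg fun k hk =>
    mul_nonneg (pow_nonneg (inv_nonneg.mpr hq0.le) k) (ha k (mem_range.mp hk))
  rw [sum_range_inv_pow_mul_succ hq0.ne'] at hsum
  have hlast : q * (q⁻¹ ^ T * a T) ≤ q * a 0 + c * G := by
    linarith [mul_le_mul_of_nonneg_right hρ hS]
  have hG : (1 - q) * G = q * (q⁻¹ ^ T - 1) := one_sub_mul_geom_sum_inv hq0.ne' T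
  have hqT : q ^ T * q⁻¹ ^ T = 1 := by rw [← mul_pow, mul_inv_cancel₀ hq0.ne', one_pow]
  have h1q : 0 < 1 - q := sub_pos.mpr hq1
  have hpos : 0 < (1 - q) * q * q⁻¹ ^ T := by positivity
  refine le_of_mul_le_mul_left ?_ hpos
  calc (1 - q) * q * q⁻¹ ^ T * a T = (1 - q) * (q * (q⁻¹ ^ T * a T)) := by ring
    _ ≤ (1 - q) * (q * a 0 + c * G) := mul_le_mul_of_nonneg_left hlast h1q.le
    _ = (1 - q) * q * a 0 + c * (q * q⁻¹ ^ T) - c * q := by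
      linear_combination c * hG
    _ ≤ (1 - q) * q * a 0 + c * (q * q⁻¹ ^ T) := sub_le_self _ (mul_nonneg hc hq0.le)
    _ = (1 - q) * q * q⁻¹ ^ T * (q ^ T * a 0 + c / (1 - q)) := by
      linear_combination -(1 - q) * q * a 0 * hqT - c * q * q⁻¹ ^ T * mul_inv_cancel₀ h1q.ne'

theorem weighted_sum_recursion_to_linear_rate_general
    (γ μ c : ℝ) (hc : 0 ≤ c)
    (hq0 : 0 < 1 - γ * μ / 2) (hq1 : 1 - γ * μ / 2 < 1)
    (T : ℕ) (a : ℕ → ℝ) (ha : ∀ k ≤ T, 0 ≤ a k)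
    (hsum : ∑ k ∈ Finset.range T, ((1 - γ * μ / 2)⁻¹) ^ k * a (k + 1)
        ≤ (1 - γ * μ) * ∑ k ∈ Finset.range T, ((1 - γ * μ / 2)⁻¹) ^ k * a k
          + c * ∑ k ∈ Finset.range T, ((1 - γ * μ / 2)⁻¹) ^ k) :
    a T ≤ (1 - γ * μ / 2) ^ T * a 0 + 2 * c / (γ * μ) := by
  have hρ : 1 - γ * μ ≤ 1 - γ * μ / 2 := by linarith
  have hrate := le_pow_mul_add_of_weighted_sum_le hq0 hq1 hρ hc T a
    (fun k hk => ha k hk.le) hsum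
  rwa [show 1 - (1 - γ * μ / 2) = γ * μ / 2 by ring, div_div_eq_mul_div, mul_comm c] at hrate

/-- From the weighted-sum inequality
`∑_{k<T} q^{−k} a_{k+1} ≤ (1 − γμ) ∑_{k<T} q^{−k} a_k + c ∑_{k<T} q^{−k}` with
`q = 1 − γμ/2 ∈ (0,1)` and nonnegative `a_0, …, a_T`, one gets
`a_T ≤ (1 − γμ/2)^T a_0 + 2c/(γμ)`. -/
theorem weighted_sum_recursion_to_linear_rate
    (γ μ c : ℝ) (hγ : 0 < γ) (hμ : 0 < μ) (hc : 0 ≤ c)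
    (hq0 : 0 < 1 - γ * μ / 2) (hq1 : 1 - γ * μ / 2 < 1)
    (T : ℕ) (hT : 1 ≤ T) (a : ℕ → ℝ) (ha : ∀ k ≤ T, 0 ≤ a k)
    (hsum : ∑ k ∈ Finset.range T, ((1 - γ * μ / 2)⁻¹) ^ k * a (k + 1)
        ≤ (1 - γ * μ) * ∑ k ∈ Finset.range T, ((1 - γ * μ / 2)⁻¹) ^ k * a k
          + c * ∑ k ∈ Finset.range T, ((1 - γ * μ / 2)⁻¹) ^ k) :
    a T ≤ (1 - γ * μ / 2) ^ T * a 0 + 2 * c / (γ * μ) :=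
  weighted_sum_recursion_to_linear_rate_general γ μ c hc hq0 hq1 T a ha hsum
end
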